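/- Let Λ be an Artin algebra and 0 → A →f→ B →g→ C → 0 an almost split sequence in mod Λ. Then the sequence 0 → (A → 0) → (B →g→ C) → (C →id→ C) → 0 in H(Λ), whose left map is the pair (f, 0) and whose right map is the pair (g, id_C), is an almost split sequence in H(Λ) ending at (C →id→ C). -/

import Mathlib

universe u

section Core

variable (Λ : Type u) [Ring Λ]

/-- A module is indecomposable: it is nonzero and admits no nontrivial direct sum
decomposition. -/
def IsIndecMod (M : Type u) [AddCommGroup M] [Module Λ M] : Prop :=
  Nontrivial M ∧ ∀ N₁ N₂ : Submodule Λ M, IsCompl N₁ N₂ → N₁ = ⊥ ∨ N₂ = ⊥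

/-- A linear map is a split epimorphism if it admits a section. -/
def IsSplitEpiMod {M N : Type u} [AddCommGroup M] [Module Λ M] [AddCommGroup N] [Module Λ N]
    (g : M →ₗ[Λ] N) : Prop :=
  ∃ s : N →ₗ[Λ] M, g ∘ₗ s = LinearMap.id

/-- A linear map is a split monomorphism if it admits a retraction. -/
def IsSplitMonoMod {M N : Type u} [AddCommGroup M] [Module Λ M] [AddCommGroup N] [Module Λ N]
    (f : M →ₗ[Λ] N) : Prop :=
  ∃ r : N →ₗ[Λ] M, r ∘ₗ f = LinearMap.id

/-- `0 → A → B → C → 0` is an almost split (Auslander-Reiten) sequence in `mod Λ`. -/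
structure IsAlmostSplitSeq {A B C : Type u} [AddCommGroup A] [Module Λ A]
    [AddCommGroup B] [Module Λ B] [AddCommGroup C] [Module Λ C]
    (f : A →ₗ[Λ] B) (g : B →ₗ[Λ] C) : Prop where
  finA : Module.Finite Λ A
  finB : Module.Finite Λ B
  finC : Module.Finite Λ C
  inj : Function.Injective f
  surj : Function.Surjective g
  exact : LinearMap.range f = LinearMap.ker g
  not_split : ¬ IsSplitEpiMod Λ g
  indecA : IsIndecMod Λ A
  indecC : IsIndecMod Λ C
  lift : ∀ (X : Type u) [AddCommGroup X] [Module Λ X], Module.Finite Λ X →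
    ∀ h : X →ₗ[Λ] C, ¬ IsSplitEpiMod Λ h → ∃ k : X →ₗ[Λ] B, g ∘ₗ k = h

/-- `N ≅ τ M`, expressed through the defining property of the Auslander-Reiten
translation: `N` is the starting term of an almost split sequence ending at `M`. -/
def IsARTranslateOf (N M : Type u) [AddCommGroup N] [Module Λ N]
    [AddCommGroup M] [Module Λ M] : Prop :=
  ∃ (B : Type u) (_ : AddCommGroup B) (_ : Module Λ B)
    (f : N →ₗ[Λ] B) (g : B →ₗ[Λ] M), IsAlmostSplitSeq Λ f g

/-- `p : P → M` is a projective cover: `P` is projective, `p` is surjective and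
`ker p` is superfluous in `P`. -/
structure IsProjCover {P M : Type u} [AddCommGroup P] [Module Λ P]
    [AddCommGroup M] [Module Λ M] (p : P →ₗ[Λ] M) : Prop where
  proj : Module.Projective Λ P
  surj : Function.Surjective p
  superfluous : ∀ N : Submodule Λ P, N ⊔ LinearMap.ker p = ⊤ → N = ⊤

/-- `e : M → I` is an injective envelope: `I` is injective, `e` is injective and
the image of `e` is essential in `I`. -/
structure IsInjEnv {M I : Type u} [AddCommGroup M] [Module Λ M]
    [AddCommGroup I] [Module Λ I] (e : M →ₗ[Λ] I) : Prop where
  inj_obj : Module.Injective Λ I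
  inj : Function.Injective e
  essential : ∀ N : Submodule Λ I, N ⊓ LinearMap.range e = ⊥ → N = ⊥

/-- `P₁ →α→ P₀ →π→ C → 0` is a minimal projective presentation. -/
structure IsMinProjPres {P₁ P₀ C : Type u} [AddCommGroup P₁] [Module Λ P₁]
    [AddCommGroup P₀] [Module Λ P₀] [AddCommGroup C] [Module Λ C]
    (α : P₁ →ₗ[Λ] P₀) (π : P₀ →ₗ[Λ] C) : Prop where
  cover : IsProjCover Λ π
  proj₁ : Module.Projective Λ P₁
  exact : LinearMap.range α = LinearMap.ker π
  superfluous : ∀ N : Submodule Λ P₁, N ⊔ LinearMap.ker α = ⊤ → N = ⊤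

/-- `f : A → B` is a minimal left almost split map in `mod Λ`. -/
def IsMinLeftAlmostSplit {A B : Type u} [AddCommGroup A] [Module Λ A]
    [AddCommGroup B] [Module Λ B] (f : A →ₗ[Λ] B) : Prop :=
  ¬ IsSplitMonoMod Λ f ∧
  (∀ (X : Type u) [AddCommGroup X] [Module Λ X], Module.Finite Λ X →
    ∀ u : A →ₗ[Λ] X, ¬ IsSplitMonoMod Λ u → ∃ w : B →ₗ[Λ] X, w ∘ₗ f = u) ∧
  ∀ φ : B →ₗ[Λ] B, φ ∘ₗ f = f → Function.Bijective φ

/-- `g : C → D` is a minimal right almost split map in `mod Λ`. -/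
def IsMinRightAlmostSplit {C D : Type u} [AddCommGroup C] [Module Λ C]
    [AddCommGroup D] [Module Λ D] (g : C →ₗ[Λ] D) : Prop :=
  ¬ IsSplitEpiMod Λ g ∧
  (∀ (X : Type u) [AddCommGroup X] [Module Λ X], Module.Finite Λ X →
    ∀ u : X →ₗ[Λ] D, ¬ IsSplitEpiMod Λ u → ∃ w : X →ₗ[Λ] C, g ∘ₗ w = u) ∧
  ∀ φ : C →ₗ[Λ] C, g ∘ₗ φ = g → Function.Bijective φ

/-- The Jacobson radical of a module: the intersection of its maximal submodules. -/
def modRad (M : Type u) [AddCommGroup M] [Module Λ M] : Submodule Λ M :=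
  sInf {N : Submodule Λ M | IsCoatom N}

/-- The socle of a module: the sum of its simple submodules. -/
def modSoc (M : Type u) [AddCommGroup M] [Module Λ M] : Submodule Λ M :=
  sSup {N : Submodule Λ M | IsAtom N}

/-- An object of the morphism category `H(Λ)`: a homomorphism `f : X → Y` of
`Λ`-modules. -/
structure HObj : Type (u + 1) where
  X : Type u
  Y : Type u
  [ax : AddCommGroup X]
  [mx : Module Λ X]
  [ay : AddCommGroup Y]
  [my : Module Λ Y]
  f : X →ₗ[Λ] Y

attribute [instance] HObj.ax HObj.mx HObj.ay HObj.my

variable {Λ}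

/-- The object of `H(Λ)` determined by a linear map. -/
def HObj.of {X Y : Type u} [AddCommGroup X] [Module Λ X] [AddCommGroup Y] [Module Λ Y]
    (f : X →ₗ[Λ] Y) : HObj Λ :=
  ⟨X, Y, f⟩

@[simp] lemma HObj.of_f {X Y : Type u} [AddCommGroup X] [Module Λ X] [AddCommGroup Y]
    [Module Λ Y] (f : X →ₗ[Λ] Y) : (HObj.of f).f = f := rfl

/-- The object `(0 → P)` of `H(Λ)`. -/
def HObj.fromZero (P : Type u) [AddCommGroup P] [Module Λ P] : HObj Λ :=
  HObj.of (0 : PUnit.{u+1} →ₗ[Λ] P)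

/-- The object `(P → 0)` of `H(Λ)`. -/
def HObj.toZero (P : Type u) [AddCommGroup P] [Module Λ P] : HObj Λ :=
  HObj.of (0 : P →ₗ[Λ] PUnit.{u+1})

/-- The object `(P →id→ P)` of `H(Λ)`. -/
def HObj.ofId (P : Type u) [AddCommGroup P] [Module Λ P] : HObj Λ :=
  HObj.of (LinearMap.id : P →ₗ[Λ] P)

/-- A morphism in the morphism category `H(Λ)`: a pair of linear maps giving a
commutative square. -/
@[ext] structure HHom (M N : HObj Λ) where
  h₁ : M.X →ₗ[Λ] N.X
  h₂ : M.Y →ₗ[Λ] N.Y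
  comm : N.f ∘ₗ h₁ = h₂ ∘ₗ M.f

/-- The identity morphism of `H(Λ)`. -/
def HHom.id (M : HObj Λ) : HHom M M :=
  ⟨LinearMap.id, LinearMap.id, by simp⟩

/-- Composition in `H(Λ)`. -/
def HHom.comp {M N P : HObj Λ} (g : HHom N P) (f : HHom M N) : HHom M P :=
  ⟨g.h₁ ∘ₗ f.h₁, g.h₂ ∘ₗ f.h₂, by
    ext x
    have hg := LinearMap.congr_fun g.comm (f.h₁ x)
    have hf := LinearMap.congr_fun f.comm x
    simp only [LinearMap.comp_apply] at hg hf ⊢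
    rw [hg, hf]⟩

/-- An object of `H(Λ)` lies in the morphism category of finitely generated
modules. -/
def HObj.Fin (M : HObj Λ) : Prop :=
  Module.Finite Λ M.X ∧ Module.Finite Λ M.Y

/-- Split epimorphisms in `H(Λ)`. -/
def IsSplitEpiH {M N : HObj Λ} (v : HHom M N) : Prop :=
  ∃ s : HHom N M, v.comp s = HHom.id N

/-- Split monomorphisms in `H(Λ)`. -/
def IsSplitMonoH {M N : HObj Λ} (u : HHom M N) : Prop :=
  ∃ r : HHom N M, r.comp u = HHom.id M

/-- Direct sum in `H(Λ)`. -/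
def HObj.dsum (M N : HObj Λ) : HObj Λ :=
  HObj.of (M.f.prodMap N.f)

/-- Isomorphism of objects of `H(Λ)`. -/
structure HIso (M N : HObj Λ) where
  e₁ : M.X ≃ₗ[Λ] N.X
  e₂ : M.Y ≃ₗ[Λ] N.Y
  comm : ∀ x, N.f (e₁ x) = e₂ (M.f x)

/-- An object of `H(Λ)` is indecomposable: it is nonzero, and in any way of writing
it as a direct sum of two subobjects, one of the two is zero. -/
def IsIndecH (M : HObj Λ) : Prop :=
  (Nontrivial M.X ∨ Nontrivial M.Y) ∧
  ∀ (U₁ U₂ : Submodule Λ M.X) (V₁ V₂ : Submodule Λ M.Y),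
    IsCompl U₁ U₂ → IsCompl V₁ V₂ →
    Submodule.map M.f U₁ ≤ V₁ → Submodule.map M.f U₂ ≤ V₂ →
    (U₁ = ⊥ ∧ V₁ = ⊥) ∨ (U₂ = ⊥ ∧ V₂ = ⊥)

/-- Projective objects of `H(Λ)` (lifting property against epimorphisms). -/
def IsProjH (M : HObj Λ) : Prop :=
  ∀ (B C : HObj Λ), B.Fin → C.Fin → ∀ v : HHom B C,
    Function.Surjective v.h₁ → Function.Surjective v.h₂ →
    ∀ h : HHom M C, ∃ k : HHom M B, v.comp k = h

/-- Injective objects of `H(Λ)` (extension property along monomorphisms). -/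
def IsInjH (M : HObj Λ) : Prop :=
  ∀ (A B : HObj Λ), A.Fin → B.Fin → ∀ u : HHom A B,
    Function.Injective u.h₁ → Function.Injective u.h₂ →
    ∀ h : HHom A M, ∃ k : HHom B M, k.comp u = h

/-- `0 → A →u→ B →v→ C → 0` is an almost split sequence in `H(Λ)`. -/
structure IsAlmostSplitSeqH {A B C : HObj Λ} (u : HHom A B) (v : HHom B C) : Prop where
  finA : A.Fin
  finB : B.Fin
  finC : C.Fin
  inj₁ : Function.Injective u.h₁
  inj₂ : Function.Injective u.h₂
  surj₁ : Function.Surjective v.h₁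
  surj₂ : Function.Surjective v.h₂
  exact₁ : LinearMap.range u.h₁ = LinearMap.ker v.h₁
  exact₂ : LinearMap.range u.h₂ = LinearMap.ker v.h₂
  not_split : ¬ IsSplitEpiH v
  indecA : IsIndecH A
  indecC : IsIndecH C
  lift : ∀ T : HObj Λ, T.Fin → ∀ h : HHom T C, ¬ IsSplitEpiH h →
    ∃ k : HHom T B, v.comp k = h

/-- `τ_H(X) ≅ Y`, expressed through the defining property of the Auslander-Reiten
translation in `H(Λ)`: `Y` is the starting term of an almost split sequence in
`H(Λ)` ending at `X`. -/
def TauHRel (Y X : HObj Λ) : Prop :=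
  ∃ (B : HObj Λ) (u : HHom Y B) (v : HHom B X), IsAlmostSplitSeqH u v

end Core

/-! The sequence in `H(Λ)` is the given one in the first coordinate, and
`0 → 0 → C →id→ C → 0` in the second. A morphism `k : T → (C →id→ C)` is determined by
its second component (`k.h₁ = k.h₂ ∘ T.f`), so it splits in `H(Λ)` as soon as `k.h₁` splits
in `mod Λ`, with section `(s, T.f ∘ s)`; hence lifting `k` through `(g, id)` reduces to lifting
`k.h₁` through `g`. Indecomposability of `(A → 0)` and `(C →id→ C)` reduces to that of `A`
and `C`. -/

theorem IsCompl.eq_of_le_of_le {α : Type*} [Lattice α] [BoundedOrder α] [IsModularLattice α]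
    {x y x' y' : α} (h : IsCompl x y) (h' : IsCompl x' y') (hx : x ≤ x') (hy : y ≤ y') :
    x = x' := by
  refine le_antisymm hx ?_
  calc x' = (x ⊔ y) ⊓ x' := by rw [h.sup_eq_top, top_inf_eq]
    _ = x ⊔ y ⊓ x' := sup_inf_assoc_of_le y hx
    _ ≤ x ⊔ y' ⊓ x' := sup_le_sup_left (inf_le_inf_right x' hy) x
    _ = x := by rw [inf_comm, h'.inf_eq_bot, sup_bot_eq]

section MorphismCategory

variable {Λ : Type u} [Ring Λ]

theorem HObj.fin_toZero {P : Type u} [AddCommGroup P] [Module Λ P] (hP : Module.Finite Λ P) :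
    (HObj.toZero P : HObj Λ).Fin :=
  ⟨hP, inferInstanceAs (Module.Finite Λ PUnit.{u+1})⟩

theorem HObj.fin_ofId {P : Type u} [AddCommGroup P] [Module Λ P] (hP : Module.Finite Λ P) :
    (HObj.ofId P : HObj Λ).Fin :=
  ⟨hP, hP⟩

theorem isIndecH_toZero {P : Type u} [AddCommGroup P] [Module Λ P] (hP : IsIndecMod Λ P) :
    IsIndecH (HObj.toZero P : HObj Λ) := by
  refine ⟨Or.inl hP.1, fun U₁ U₂ V₁ V₂ hU _ _ _ => ?_⟩
  have : Subsingleton (HObj.toZero P : HObj Λ).Y := inferInstanceAs (Subsingleton PUnit.{u+1})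
  rcases hP.2 U₁ U₂ hU with hU₁ | hU₂
  · exact Or.inl ⟨hU₁, Submodule.eq_bot_of_subsingleton⟩
  · exact Or.inr ⟨hU₂, Submodule.eq_bot_of_subsingleton⟩

theorem isIndecH_ofId {P : Type u} [AddCommGroup P] [Module Λ P] (hP : IsIndecMod Λ P) :
    IsIndecH (HObj.ofId P : HObj Λ) := by
  refine ⟨Or.inl hP.1, fun U₁ U₂ V₁ V₂ hU hV hUV₁ hUV₂ => ?_⟩
  have hU₁V₁ : U₁ ≤ V₁ := fun x hx => hUV₁ ⟨x, hx, rfl⟩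
  have hU₂V₂ : U₂ ≤ V₂ := fun x hx => hUV₂ ⟨x, hx, rfl⟩
  have hV₁ : U₁ = V₁ := hU.eq_of_le_of_le hV hU₁V₁ hU₂V₂
  have hV₂ : U₂ = V₂ := hU.symm.eq_of_le_of_le hV.symm hU₂V₂ hU₁V₁
  rcases hP.2 U₁ U₂ hU with hU₁ | hU₂
  · exact Or.inl ⟨hU₁, hV₁ ▸ hU₁⟩
  · exact Or.inr ⟨hU₂, hV₂ ▸ hU₂⟩

theorem IsSplitEpiH.isSplitEpiMod_h₁ {M N : HObj Λ} {v : HHom M N} (hv : IsSplitEpiH v) :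
    IsSplitEpiMod Λ v.h₁ :=
  let ⟨s, hs⟩ := hv
  ⟨s.h₁, congrArg HHom.h₁ hs⟩

theorem HHom.h₁_eq_h₂_comp_of_ofId {T : HObj Λ} {P : Type u} [AddCommGroup P] [Module Λ P]
    (k : HHom T (HObj.ofId P)) : k.h₁ = k.h₂ ∘ₗ T.f :=
  k.comm

theorem isSplitEpiH_of_isSplitEpiMod_h₁ {T : HObj Λ} {P : Type u} [AddCommGroup P]
    [Module Λ P] {k : HHom T (HObj.ofId P)} (hk : IsSplitEpiMod Λ k.h₁) : IsSplitEpiH k := by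
  obtain ⟨s, hs⟩ := hk
  refine ⟨⟨s, T.f ∘ₗ s, (LinearMap.comp_id _).symm⟩, HHom.ext hs ?_⟩
  change k.h₂ ∘ₗ T.f ∘ₗ s = LinearMap.id
  rw [← LinearMap.comp_assoc, ← k.h₁_eq_h₂_comp_of_ofId]
  exact hs

theorem IsAlmostSplitSeq.exists_lift_ofId {A B C : Type u}
    [AddCommGroup A] [Module Λ A] [AddCommGroup B] [Module Λ B] [AddCommGroup C] [Module Λ C]
    {f : A →ₗ[Λ] B} {g : B →ₗ[Λ] C} (h : IsAlmostSplitSeq Λ f g) {T : HObj Λ} (hT : T.Fin)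
    (k : HHom T (HObj.ofId C)) (hk : ¬ IsSplitEpiH k) :
    ∃ l : HHom T (HObj.of g),
      (⟨g, LinearMap.id, rfl⟩ : HHom (HObj.of g) (HObj.ofId C)).comp l = k := by
  obtain ⟨l₁, hl₁⟩ := h.lift T.X hT.1 k.h₁ (mt isSplitEpiH_of_isSplitEpiMod_h₁ hk)
  exact ⟨⟨l₁, k.h₂, hl₁.trans k.h₁_eq_h₂_comp_of_ofId⟩, HHom.ext hl₁ (LinearMap.id_comp _)⟩

end MorphismCategory

/-- Let `Λ` be an Artin algebra and `0 → A →f→ B →g→ C → 0` an almost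
split sequence in `mod Λ`. Then `0 → (A → 0) → (B →g→ C) → (C →id→ C) → 0`, with left
map `(f, 0)` and right map `(g, id_C)`, is an almost split sequence in `H(Λ)` ending at
`(C →id→ C)`. -/
theorem stmt_4
    (Λ : Type u) [Ring Λ]
    (A B C : Type u) [AddCommGroup A] [Module Λ A] [AddCommGroup B] [Module Λ B]
    [AddCommGroup C] [Module Λ C]
    (f : A →ₗ[Λ] B) (g : B →ₗ[Λ] C) (h : IsAlmostSplitSeq Λ f g) :
    IsAlmostSplitSeqH
      (A := HObj.toZero A) (B := HObj.of g) (C := HObj.ofId C)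
      ⟨f, 0, by
        ext x
        have : f x ∈ LinearMap.ker g := h.exact ▸ LinearMap.mem_range_self f x
        show g (f x) = 0
        exact LinearMap.mem_ker.mp this⟩
      ⟨g, LinearMap.id, by ext x; rfl⟩ := by
  exact
  { finA := HObj.fin_toZero h.finA
    finB := ⟨h.finB, h.finC⟩
    finC := HObj.fin_ofId h.finC
    inj₁ := h.inj
    inj₂ := Function.injective_of_subsingleton (α := PUnit.{u+1}) _
    surj₁ := h.surj
    surj₂ := Function.surjective_id
    exact₁ := h.exact
    exact₂ := LinearMap.range_zero.trans LinearMap.ker_id.symm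
    not_split := fun hv => h.not_split hv.isSplitEpiMod_h₁
    indecA := isIndecH_toZero h.indecA
    indecC := isIndecH_ofId h.indecC
    lift := fun _ => h.exists_lift_ofId }
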